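/- Let b₁,…,b_m ∈ C₀(Y₁), c₁,…,c_m ∈ C₀(Y₂), and distinct points y₁,…,y_m ∈ Y₁, z₁,…,z_m ∈ Y₂ with bⱼ(yᵢ) = δᵢⱼ and cₖ(zᵢ) = δᵢₖ. Define ρ₁(b) := ∑ᵢ b(yᵢ) e_{i,i} and ρ₂(c) := U (∑ᵢ c(zᵢ) e_{i,i}) U*, where U is the unitary Fourier matrix m^{−1/2} ∑ ω^{ij} e_{i,j}. Then ∑_{i,j,k=1}^m ω^{k(j−i)} e_{i,j} ⊗ ρ₂(c_k)·ρ₁(b_j) = ∑_{i,j=1}^m e_{i,j} ⊗ e_{i,j} in M_m(ℂ) ⊗ M_m(ℂ). -/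

import Mathlib

open scoped ZeroAtInfty Matrix Kronecker

/-!
Since `b_j(y_i) = δ_{ij}` and `c_k(z_i) = δ_{ik}`, `ρ₁(b_j) = e_{j,j}` and
`ρ₂(c_k) = U e_{k,k} U*`, so the second tensor factor paired with `e_{i,j}` is
`U D U* e_{j,j}` with `D = diag_k(ω^{(k+1)(j-i)})`. Multiplying by `D` turns column `j` of `U*`
into column `i`, and `U U* = 1` by orthogonality of the characters `k ↦ ω^{(k+1)d}`; hence the
factor is `e_{i,j}`.
-/

namespace Matrix

theorem kronecker_sum {ι α l m n p : Type*} [Fintype ι] [NonUnitalNonAssocSemiring α]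
    (A : Matrix l m α) (B : ι → Matrix n p α) :
    A ⊗ₖ ∑ k, B k = ∑ k, A ⊗ₖ B k := by
  ext ⟨i, i'⟩ ⟨j, j'⟩
  simp [sum_apply, Finset.mul_sum]

theorem sum_smul_mul_single_mul {R l n o : Type*} [CommSemiring R] [Fintype n] [DecidableEq n]
    (A : Matrix l n R) (B : Matrix n o R) (a : n → R) :
    ∑ k, a k • (A * single k k (1 : R) * B) = A * diagonal a * B := by
  rw [← sum_single_eq_diagonal, Matrix.mul_sum, Matrix.sum_mul]
  refine Finset.sum_congr rfl fun k _ => ?_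
  rw [← Matrix.smul_mul, ← Matrix.mul_smul, smul_single, smul_eq_mul, mul_one]

end Matrix

namespace IsPrimitiveRoot

variable {K : Type*} [Field K] {ω : K} {m : ℕ}

theorem sum_fin_zpow_succ_mul (hω : IsPrimitiveRoot ω m) (d : ℤ) :
    ∑ k : Fin m, ω ^ (((k : ℤ) + 1) * d) = if (m : ℤ) ∣ d then (m : K) else 0 := by
  have hpow (k : Fin m) : ω ^ (((k : ℤ) + 1) * d) = (ω ^ d) ^ ((k : ℕ) + 1) := by
    rw [mul_comm, zpow_mul]
    norm_cast
  simp_rw [hpow, Fin.sum_univ_eq_sum_range (fun k => (ω ^ d) ^ (k + 1)), pow_succ,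
    ← Finset.sum_mul]
  split_ifs with hd
  · simp [(hω.zpow_eq_one_iff_dvd d).2 hd]
  · have hne : ω ^ d ≠ 1 := mt (hω.zpow_eq_one_iff_dvd d).1 hd
    have hroot : (ω ^ d) ^ m = 1 := by
      rw [← zpow_natCast, ← zpow_mul, mul_comm, zpow_mul, zpow_natCast, hω.pow_eq_one, one_zpow]
    rw [geom_sum_eq hne, hroot, sub_self, zero_div, zero_mul]

theorem sum_fin_zpow_succ_mul_sub (hω : IsPrimitiveRoot ω m) (p i : Fin m) :
    ∑ k : Fin m, ω ^ (((k : ℤ) + 1) * ((p : ℤ) - i)) = if p = i then (m : K) else 0 := by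
  rw [hω.sum_fin_zpow_succ_mul]
  congr 1
  refine propext ⟨fun hd => Fin.ext ?_, fun h => by simp [h]⟩
  have hsub := Int.eq_zero_of_dvd_of_natAbs_lt_natAbs hd (by omega)
  omega

end IsPrimitiveRoot

open Matrix (diagonal single)

noncomputable def fourierMatrix (m : ℕ) (ω : ℂ) : Matrix (Fin m) (Fin m) ℂ :=
  Matrix.of fun i j : Fin m => ((Real.sqrt m : ℝ) : ℂ)⁻¹ * ω ^ ((i.1 + 1) * (j.1 + 1))

variable {m : ℕ} {ω : ℂ}

theorem fourierMatrix_apply (i k : Fin m) :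
    fourierMatrix m ω i k = ((Real.sqrt m : ℝ) : ℂ)⁻¹ * ω ^ (((i : ℤ) + 1) * ((k : ℤ) + 1)) := by
  rw [fourierMatrix, Matrix.of_apply]
  norm_cast

theorem star_fourierMatrix_apply (hω : IsPrimitiveRoot ω m) (i k : Fin m) :
    star (fourierMatrix m ω i k) =
      ((Real.sqrt m : ℝ) : ℂ)⁻¹ * ω ^ (-(((i : ℤ) + 1) * ((k : ℤ) + 1))) := by
  have hconj : star ω = ω⁻¹ := (RCLike.inv_eq_conj (hω.norm'_eq_one i.pos.ne')).symm
  rw [fourierMatrix_apply, star_mul', star_zpow₀, hconj, inv_zpow', star_inv₀, Complex.star_def,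
    Complex.conj_ofReal]

theorem fourierMatrix_mul_star_apply (hω : IsPrimitiveRoot ω m) (p q k : Fin m) :
    fourierMatrix m ω p k * star (fourierMatrix m ω q k) =
      (m : ℂ)⁻¹ * ω ^ (((k : ℤ) + 1) * ((p : ℤ) - q)) := by
  have hω0 : ω ≠ 0 := hω.ne_zero p.pos.ne'
  have hsqrt : ((Real.sqrt m : ℝ) : ℂ)⁻¹ * ((Real.sqrt m : ℝ) : ℂ)⁻¹ = (m : ℂ)⁻¹ := by
    rw [← mul_inv, ← Complex.ofReal_mul, Real.mul_self_sqrt (Nat.cast_nonneg m),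
      Complex.ofReal_natCast]
  rw [fourierMatrix_apply, star_fourierMatrix_apply hω, mul_mul_mul_comm, hsqrt,
    ← zpow_add₀ hω0]
  ring_nf

theorem fourierMatrix_mul_conjTranspose (hω : IsPrimitiveRoot ω m) :
    fourierMatrix m ω * (fourierMatrix m ω)ᴴ = 1 := by
  ext p q
  have hm : (m : ℂ) ≠ 0 := Nat.cast_ne_zero.2 p.pos.ne'
  simp_rw [Matrix.mul_apply, Matrix.conjTranspose_apply, fourierMatrix_mul_star_apply hω,
    ← Finset.mul_sum, hω.sum_fin_zpow_succ_mul_sub, Matrix.one_apply, mul_ite, mul_zero,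
    inv_mul_cancel₀ hm]

theorem diagonal_mul_conjTranspose_fourierMatrix_mul_single (hω : IsPrimitiveRoot ω m)
    (i j : Fin m) :
    diagonal (fun k : Fin m => ω ^ (((k : ℤ) + 1) * ((j : ℤ) - i))) *
        (fourierMatrix m ω)ᴴ * single j j 1 =
      (fourierMatrix m ω)ᴴ * single i j 1 := by
  have hω0 : ω ≠ 0 := hω.ne_zero i.pos.ne'
  ext k q
  obtain rfl | hq := eq_or_ne q j
  · simp only [Matrix.mul_single_apply_same, mul_one, Matrix.diagonal_mul,
      Matrix.conjTranspose_apply, star_fourierMatrix_apply hω, mul_left_comm _ (_ : ℂ)⁻¹,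
      ← zpow_add₀ hω0]
    ring_nf
  · simp only [Matrix.mul_single_apply_of_ne (hbj := hq)]

theorem fourierMatrix_mul_diagonal_mul_conjTranspose_mul_single (hω : IsPrimitiveRoot ω m)
    (i j : Fin m) :
    fourierMatrix m ω * diagonal (fun k : Fin m => ω ^ (((k : ℤ) + 1) * ((j : ℤ) - i))) *
        (fourierMatrix m ω)ᴴ * single j j 1 = single i j 1 := by
  rw [Matrix.mul_assoc _ (diagonal _), Matrix.mul_assoc,
    diagonal_mul_conjTranspose_fourierMatrix_mul_single hω, ← Matrix.mul_assoc,
    fourierMatrix_mul_conjTranspose hω, Matrix.one_mul]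

theorem stmt_10_general {Y₁ Y₂ : Type*} [TopologicalSpace Y₁] [TopologicalSpace Y₂]
    {m : ℕ} (ω : ℂ) (hω : IsPrimitiveRoot ω m)
    (y : Fin m → Y₁) (z : Fin m → Y₂)
    (b : Fin m → C₀(Y₁, ℂ)) (c : Fin m → C₀(Y₂, ℂ))
    (hb : ∀ i j, b j (y i) = if i = j then 1 else 0)
    (hc : ∀ i k, c k (z i) = if i = k then 1 else 0)
    (U : Matrix (Fin m) (Fin m) ℂ)
    (hU : U = Matrix.of fun i j : Fin m =>
      ((Real.sqrt m : ℝ) : ℂ)⁻¹ * ω ^ ((i.1 + 1) * (j.1 + 1)))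
    (ρ₁ : C₀(Y₁, ℂ) → Matrix (Fin m) (Fin m) ℂ)
    (hρ₁ : ρ₁ = fun f => ∑ i : Fin m, Matrix.single i i (f (y i)))
    (ρ₂ : C₀(Y₂, ℂ) → Matrix (Fin m) (Fin m) ℂ)
    (hρ₂ : ρ₂ = fun g => U * Matrix.diagonal (fun i => g (z i)) * Uᴴ) :
    ∑ i : Fin m, ∑ j : Fin m, ∑ k : Fin m,
        (ω ^ ((((k.1 : ℤ) + 1)) * ((j.1 : ℤ) - (i.1 : ℤ)))) •
          (Matrix.single i j (1 : ℂ) ⊗ₖ (ρ₂ (c k) * ρ₁ (b j))) =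
      ∑ i : Fin m, ∑ j : Fin m,
        Matrix.single i j (1 : ℂ) ⊗ₖ Matrix.single i j (1 : ℂ) := by
  obtain rfl : U = fourierMatrix m ω := hU
  subst hρ₁ hρ₂
  have hρ₁b (j : Fin m) : ∑ i, single i i (b j (y i)) = single j j 1 := by
    rw [Matrix.sum_single_eq_diagonal, ← Matrix.diagonal_single]
    congr with i
    rw [hb, Pi.single_apply]
  have hdiag_c (k : Fin m) : diagonal (fun i => c k (z i)) = single k k 1 := by
    rw [← Matrix.diagonal_single]
    congr with i
    rw [hc, Pi.single_apply]
  simp only [hρ₁b, hdiag_c, ← Matrix.kronecker_smul, ← Matrix.kronecker_sum,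
    Matrix.mul_assoc _ _ (single _ _ _), Matrix.sum_smul_mul_single_mul]
  simp only [← Matrix.mul_assoc, fourierMatrix_mul_diagonal_mul_conjTranspose_mul_single hω]

/-- With `ρ₁(b) = ∑ᵢ b(yᵢ) e_{i,i}` and `ρ₂(c) = U (∑ᵢ c(zᵢ) e_{i,i}) U*` for the Fourier
matrix `U`, and `b_j(y_i) = δ_{ij}`, `c_k(z_i) = δ_{ik}`, one has
`∑_{i,j,k} ω^{k(j−i)} e_{i,j} ⊗ ρ₂(c_k) ρ₁(b_j) = ∑_{i,j} e_{i,j} ⊗ e_{i,j}`. -/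
theorem stmt_10 {Y₁ Y₂ : Type*} [TopologicalSpace Y₁] [T2Space Y₁] [LocallyCompactSpace Y₁]
    [TopologicalSpace Y₂] [T2Space Y₂] [LocallyCompactSpace Y₂]
    {m : ℕ} (hm : 0 < m) (ω : ℂ) (hω : IsPrimitiveRoot ω m)
    (y : Fin m → Y₁) (z : Fin m → Y₂) (hy : Function.Injective y)
    (hz : Function.Injective z)
    (b : Fin m → C₀(Y₁, ℂ)) (c : Fin m → C₀(Y₂, ℂ))
    (hb : ∀ i j, b j (y i) = if i = j then 1 else 0)
    (hc : ∀ i k, c k (z i) = if i = k then 1 else 0)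
    (U : Matrix (Fin m) (Fin m) ℂ)
    (hU : U = Matrix.of fun i j : Fin m =>
      ((Real.sqrt m : ℝ) : ℂ)⁻¹ * ω ^ ((i.1 + 1) * (j.1 + 1)))
    (ρ₁ : C₀(Y₁, ℂ) → Matrix (Fin m) (Fin m) ℂ)
    (hρ₁ : ρ₁ = fun f => ∑ i : Fin m, Matrix.single i i (f (y i)))
    (ρ₂ : C₀(Y₂, ℂ) → Matrix (Fin m) (Fin m) ℂ)
    (hρ₂ : ρ₂ = fun g => U * Matrix.diagonal (fun i => g (z i)) * Uᴴ) :
    ∑ i : Fin m, ∑ j : Fin m, ∑ k : Fin m,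
        (ω ^ ((((k.1 : ℤ) + 1)) * ((j.1 : ℤ) - (i.1 : ℤ)))) •
          (Matrix.single i j (1 : ℂ) ⊗ₖ (ρ₂ (c k) * ρ₁ (b j))) =
      ∑ i : Fin m, ∑ j : Fin m,
        Matrix.single i j (1 : ℂ) ⊗ₖ Matrix.single i j (1 : ℂ) :=
  stmt_10_general ω hω y z b c hb hc U hU ρ₁ hρ₁ ρ₂ hρ₂
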